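/- Let A, V, B, B', W be finite-dimensional real vector spaces, let α : A → V and g : V → B be linear maps with the sequence exact at V (range α = ker g), let p : V → W → ℝ and q : B → B' → ℝ be perfect bilinear pairings, and let β : B' → W be a linear map satisfying p(v, β(b')) = q(g(v), b') for all v ∈ V and b' ∈ B'. Equip V × W with the symplectic form ω((v,w),(v',w')) = p(v,w') − p(v',w). Then the product subspace (range α) × (range β) is a Lagrangian subspace of (V × W, ω), i.e., it equals its own ω-orthogonal complement. -/
import Mathlib


/-- In the setting of an exact sequence `A →α V →g B`, perfect
pairings `p`, `q`, and a compatible map `β : B' → W`, the subspace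
`(range α) × (range β)` of `(V × W, ω)` with
`ω((v,w),(v',w')) = p(v,w') − p(v',w)` is Lagrangian: it equals its own
ω-orthogonal complement. -/
theorem stmt_4 (A V B B' W : Type*)
    [AddCommGroup A] [Module ℝ A] [FiniteDimensional ℝ A]
    [AddCommGroup V] [Module ℝ V] [FiniteDimensional ℝ V]
    [AddCommGroup B] [Module ℝ B] [FiniteDimensional ℝ B]
    [AddCommGroup B'] [Module ℝ B'] [FiniteDimensional ℝ B']
    [AddCommGroup W] [Module ℝ W] [FiniteDimensional ℝ W]
    (α : A →ₗ[ℝ] V) (g : V →ₗ[ℝ] B)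
    (hexact : LinearMap.range α = LinearMap.ker g)
    (p : V →ₗ[ℝ] W →ₗ[ℝ] ℝ)
    (hp₁ : Function.Bijective fun v : V => p v)
    (hp₂ : Function.Bijective fun w : W => p.flip w)
    (q : B →ₗ[ℝ] B' →ₗ[ℝ] ℝ)
    (hq₁ : Function.Bijective fun b : B => q b)
    (hq₂ : Function.Bijective fun b' : B' => q.flip b')
    (β : B' →ₗ[ℝ] W)
    (hcompat : ∀ (v : V) (b' : B'), p v (β b') = q (g v) b') :
    {x : V × W | ∀ y : V × W, y.1 ∈ Set.range α → y.2 ∈ Set.range β →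
        p x.1 y.2 - p y.1 x.2 = 0}
      = {x : V × W | x.1 ∈ Set.range α ∧ x.2 ∈ Set.range β} := by
  ext x
  obtain ⟨v, w⟩ := x
  simp only [Set.mem_setOf_eq]
  constructor
  · intro h
    -- Split the condition by testing (α a, 0) and (0, β b').
    have hβ0 : (0 : W) ∈ Set.range β := ⟨0, map_zero β⟩
    have hα0 : (0 : V) ∈ Set.range α := ⟨0, map_zero α⟩
    have h1 : ∀ b' : B', p v (β b') = 0 := by
      intro b'
      have := h (0, β b') hα0 ⟨b', rfl⟩
      simpa using this
    have h2 : ∀ a : A, p (α a) w = 0 := by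
      intro a
      have := h (α a, 0) ⟨a, rfl⟩ hβ0
      simpa using this
    constructor
    · -- v ∈ range α: show g v = 0 using perfectness of q
      have hg : g v = 0 := by
        apply hq₁.injective
        ext b'
        simp only [LinearMap.zero_apply, map_zero]
        rw [← hcompat v b']
        exact h1 b'
      have : v ∈ LinearMap.ker g := hg
      rw [← hexact] at this
      exact this
    · -- w ∈ range β: factor p.flip w through g and use perfectness of q
      have hker : LinearMap.ker g ≤ LinearMap.ker (p.flip w) := by
        intro v' hv'
        rw [← hexact] at hv'
        obtain ⟨a, rfl⟩ := hv'
        simpa using h2 a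
      -- lift to the quotient, transfer to range g, extend to B
      let φ : V ⧸ LinearMap.ker g →ₗ[ℝ] ℝ := (LinearMap.ker g).liftQ (p.flip w) hker
      let e : (V ⧸ LinearMap.ker g) ≃ₗ[ℝ] LinearMap.range g := g.quotKerEquivRange
      let ψ₀ : LinearMap.range g →ₗ[ℝ] ℝ := φ ∘ₗ (e.symm : LinearMap.range g →ₗ[ℝ] V ⧸ LinearMap.ker g)
      obtain ⟨ψ, hψ⟩ := ψ₀.exists_extend
      have key : ∀ v' : V, ψ (g v') = p v' w := by
        intro v'
        have h1 : e ((LinearMap.ker g).mkQ v') = ⟨g v', LinearMap.mem_range_self g v'⟩ := by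
          exact Subtype.ext (LinearMap.quotKerEquivRange_apply_mk g v')
        have h2 : e.symm ⟨g v', LinearMap.mem_range_self g v'⟩ = (LinearMap.ker g).mkQ v' := by
          rw [← h1]; exact e.symm_apply_apply _
        have := LinearMap.congr_fun hψ ⟨g v', LinearMap.mem_range_self g v'⟩
        simp only [LinearMap.comp_apply, Submodule.subtype_apply] at this
        rw [this]
        show φ (e.symm ⟨g v', LinearMap.mem_range_self g v'⟩) = p v' w
        rw [h2]
        rfl
      obtain ⟨b', hb'⟩ := hq₂.surjective ψ
      refine ⟨b', hp₂.injective ?_⟩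
      ext v'
      show p v' (β b') = p v' w
      rw [hcompat v' b', ← key v']
      exact congr_fun (congrArg (fun f => f.toFun) hb') (g v')
  · rintro ⟨⟨a, rfl⟩, ⟨b', rfl⟩⟩ ⟨y1, y2⟩ ⟨a', rfl⟩ ⟨c', rfl⟩
    have hga : ∀ a : A, g (α a) = 0 := by
      intro a
      have : α a ∈ LinearMap.ker g := by rw [← hexact]; exact ⟨a, rfl⟩
      exact this
    rw [hcompat (α a) c', hcompat (α a') b', hga, hga]
    simp
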